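/- Let A be a set and consider Inj(A,ω) as an M-set via u.i = u ∘ i. If A is finite, then Inj(A,ω) is tame and the support of every injection i : A → ω equals its image i(A). If A is countably infinite, then no element of Inj(A,ω) is finitely supported; in particular Inj(A,ω) is not tame (and M with its left regular action is not tame). -/

import Mathlib

noncomputable section

/- ## Basic setup: the monoid `M = Inj(ω,ω)`, supports, tameness, universal subgroups -/

open CategoryTheory Opposite Simplicial MonoidalCategory

set_option linter.unusedVariables false

/-- The monoid `𝕄 = Inj(ω,ω)` of injective self-maps of `ω = ℕ`, under composition. -/
noncomputable def Mi : Type := {f : ℕ → ℕ // Function.Injective f}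

noncomputable instance : Monoid Mi where
  one := ⟨id, fun _ _ h => h⟩
  mul u v := ⟨u.1 ∘ v.1, u.2.comp v.2⟩
  mul_assoc u v w := rfl
  one_mul u := rfl
  mul_one u := rfl

@[simp] lemma Mi.one_apply (n : ℕ) : (1 : Mi).1 n = n := rfl
@[simp] lemma Mi.mul_apply (u v : Mi) (n : ℕ) : (u * v).1 n = u.1 (v.1 n) := rfl

/-- An element `x` of an `𝕄`-"set" (given by a raw action `act`) is supported on `A ⊆ ω` if
every `u ∈ 𝕄` fixing `A` pointwise fixes `x`. -/
noncomputable def MSuppOn {X : Type*} (act : Mi → X → X) (A : Set ℕ) (x : X) : Prop :=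
  ∀ u : Mi, (∀ a ∈ A, u.1 a = a) → act u x = x

/-- Finitely supported elements. -/
noncomputable def MFinSupp {X : Type*} (act : Mi → X → X) (x : X) : Prop :=
  ∃ A : Set ℕ, A.Finite ∧ MSuppOn act A x

/-- The support of an element: the intersection of all finite sets on which it is supported. -/
noncomputable def MSupp {X : Type*} (act : Mi → X → X) (x : X) : Set ℕ :=
  ⋂₀ (setOf fun A : Set ℕ => A.Finite ∧ MSuppOn act A x)

/-- A (raw) `𝕄`-action is tame if every element is finitely supported. -/
noncomputable def MTame {X : Type*} (act : Mi → X → X) : Prop := ∀ x : X, MFinSupp act x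

/-- A submonoid `H ⊆ 𝕄` is a *universal subgroup* if it is a finite subgroup and `ω`, with the
tautological `H`-action, is a complete `H`-set universe, i.e. every finite `H`-set embeds
`H`-equivariantly into `ω`. -/
noncomputable def IsUniversal (H : Submonoid Mi) : Prop :=
  (∀ h ∈ H, ∃ h' ∈ H, h * h' = 1 ∧ h' * h = 1) ∧ Finite H ∧
    ∀ (n : ℕ) (ρ : ↥H →* Equiv.Perm (Fin n)), ∃ e : Fin n → ℕ,
      Function.Injective e ∧ ∀ (h : ↥H) (i : Fin n), e (ρ h i) = (h : Mi).1 (e i)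

/- ## STATEMENT 18:
Consider `Inj(A, ω)` as an `𝕄`-set via `u • i = u ∘ i`. If `A` is finite it is tame, and the
support of an injection `i` is its image `i(A)`. If `A` is countably infinite, no element is
finitely supported; in particular `Inj(A, ω)` is not tame, and `𝕄` with its left regular
action is not tame. -/

/-- The `𝕄`-set `Inj(A, ω)`. -/
noncomputable def InjSet (A : Type) : Type := {i : A → ℕ // Function.Injective i}

/-- The `𝕄`-action `u • i = u ∘ i` on `Inj(A, ω)`. -/
noncomputable def injAct (A : Type) : Mi → InjSet A → InjSet A :=
  fun u i => ⟨u.1 ∘ i.1, u.2.comp i.2⟩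

/-!
A map `u ∈ 𝕄` fixing a finite set `B` pointwise can still move any point `n ∉ B`, by swapping it
with a fresh point. Hence `i ∈ Inj(A, ω)` is supported on a finite `B` exactly when
`i(A) ⊆ B`: it is finitely supported iff its image is finite, and then its support is its image.
An infinite `A` has infinite images.
-/

lemma Mi.exists_fix_of_notMem {B : Set ℕ} (hB : B.Finite) {n : ℕ} (hn : n ∉ B) :
    ∃ u : Mi, (∀ a ∈ B, u.1 a = a) ∧ u.1 n ≠ n := by
  obtain ⟨m, hm⟩ := (hB.insert n).infinite_compl.nonempty
  simp only [Set.mem_compl_iff, Set.mem_insert_iff, not_or] at hm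
  refine ⟨⟨Equiv.swap n m, (Equiv.swap n m).injective⟩, fun a ha => ?_, ?_⟩
  · exact Equiv.swap_apply_of_ne_of_ne (by rintro rfl; exact hn ha) (by rintro rfl; exact hm.2 ha)
  · simpa [Equiv.swap_apply_left] using hm.1

section InjSet

variable {A : Type} (i : InjSet A)

lemma injAct_suppOn_range : MSuppOn (injAct A) (Set.range i.1) i :=
  fun _ hu => Subtype.ext (funext fun a => hu _ ⟨a, rfl⟩)

lemma range_subset_of_injAct_suppOn {B : Set ℕ} (hB : B.Finite) (h : MSuppOn (injAct A) B i) :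
    Set.range i.1 ⊆ B := by
  rintro _ ⟨a, rfl⟩
  by_contra hn
  obtain ⟨u, hu_fix, hu_move⟩ := Mi.exists_fix_of_notMem hB hn
  exact hu_move (congrFun (congrArg Subtype.val (h u hu_fix)) a)

lemma injAct_finSupp_iff : MFinSupp (injAct A) i ↔ (Set.range i.1).Finite :=
  ⟨fun ⟨_, hB, h⟩ => hB.subset (range_subset_of_injAct_suppOn i hB h),
    fun h => ⟨Set.range i.1, h, injAct_suppOn_range i⟩⟩

lemma injAct_supp_eq_range (h : (Set.range i.1).Finite) :
    MSupp (injAct A) i = Set.range i.1 :=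
  (Set.sInter_subset_of_mem (show _ ∧ _ from ⟨h, injAct_suppOn_range i⟩)).antisymm
    (Set.subset_sInter fun _ hB => range_subset_of_injAct_suppOn i hB.1 hB.2)

lemma injAct_not_finSupp [Infinite A] : ¬ MFinSupp (injAct A) i := by
  rw [injAct_finSupp_iff]
  exact Set.infinite_range_of_injective i.2

lemma injAct_not_tame [Infinite A] [Countable A] : ¬ MTame (injAct A) := fun h =>
  have ⟨f, hf⟩ := exists_injective_nat A
  injAct_not_finSupp ⟨f, hf⟩ (h ⟨f, hf⟩)

end InjSet

theorem injSet_tameness (A : Type) :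
    (Finite A →
      MTame (injAct A) ∧ ∀ i : InjSet A, MSupp (injAct A) i = Set.range i.1) ∧
    ((Countable A ∧ Infinite A) →
      (∀ i : InjSet A, ¬ MFinSupp (injAct A) i) ∧ ¬ MTame (injAct A)) ∧
    ¬ MTame (fun u v : Mi => u * v) := by
  refine ⟨fun _ => ⟨?_, ?_⟩, fun ⟨_, _⟩ => ⟨fun i => injAct_not_finSupp i, injAct_not_tame⟩, ?_⟩
  · exact fun i => (injAct_finSupp_iff i).2 (Set.finite_range _)
  · exact fun i => injAct_supp_eq_range i (Set.finite_range _)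
  · -- the left regular action of `𝕄` is, definitionally, `injAct ℕ`
    exact injAct_not_tame (A := ℕ)
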